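/- Let 1 ≤ p ≤ ∞ and α, β ≥ −1/2. Let T_{(α,β)} be the Jacobi operator with domain D = C^∞[−1,1], viewed as an operator on L^p([−1,1], w_{(α,β)}(t) dt), and let T_e be any admissible extension of T_{(α,β)}. Then T_e has the single-valued extension property. -/

import Mathlib

open Filter MeasureTheory
open scoped ENNReal Topology

noncomputable section

/-- The Jacobi measure `w_{(α,β)}(t) dt = (1-t)^α (1+t)^β dt` on `(-1, 1)`. -/
def jacobiMeasure (α β : ℝ) : Measure ℝ :=
  (volume.restrict (Set.Ioo (-1 : ℝ) 1)).withDensity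
    fun t => ENNReal.ofReal ((1 - t) ^ α * (1 + t) ^ β)

/-- `f : ℝ → ℂ` represents an element of `C^∞[-1,1]` (as the restriction to `[-1,1]` of a
smooth function on `ℝ`). -/
def SmoothFn (f : ℝ → ℂ) : Prop := ∀ n : ℕ, ContDiff ℝ n f

/-- The Jacobi operator `T_{(α,β)} = (1-t²) d²/dt² + [β - α - (α+β+2)t] d/dt`. -/
def jacobiOp (α β : ℝ) (f : ℝ → ℂ) : ℝ → ℂ := fun t =>
  ((1 - t ^ 2 : ℝ) : ℂ) * iteratedDeriv 2 f t +
    ((β - α - (α + β + 2) * t : ℝ) : ℂ) * iteratedDeriv 1 f t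

/-- `T_e` is an admissible extension of the Jacobi operator `T_{(α,β)}` (with domain
`C^∞[-1,1]`) on `L^p([-1,1], w_{(α,β)} dt)`: its domain contains all smooth functions, on
which it acts as `T_{(α,β)}`, and `∫ (T_e f) g w = ∫ f (T_{(α,β)} g) w` for all `f` in its
domain and all smooth `g`. -/
def IsAdmissibleJacobiExt (α β : ℝ) (p : ℝ≥0∞) [Fact (1 ≤ p)]
    (Te : Lp ℂ p (jacobiMeasure α β) →ₗ.[ℂ] Lp ℂ p (jacobiMeasure α β)) : Prop :=
  (∀ f : ℝ → ℂ, SmoothFn f → ∀ u : Lp ℂ p (jacobiMeasure α β),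
    ⇑u =ᵐ[jacobiMeasure α β] f →
      ∃ hu : u ∈ Te.domain, ⇑(Te ⟨u, hu⟩) =ᵐ[jacobiMeasure α β] jacobiOp α β f) ∧
  (∀ u : Te.domain, ∀ g : ℝ → ℂ, SmoothFn g →
    ∫ t, (Te u : Lp ℂ p (jacobiMeasure α β)) t * g t ∂(jacobiMeasure α β) =
      ∫ t, (u : Lp ℂ p (jacobiMeasure α β)) t * jacobiOp α β g t ∂(jacobiMeasure α β))

/-- A partially defined operator `T` on `X` has the single-valued extension property if for
every nonempty open `U ⊆ ℂ`, the only analytic `φ : U → X` with values in the domain of `T`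
such that `(T - z) φ z = 0` on `U` is the zero function. -/
def HasSVEP {X : Type*} [NormedAddCommGroup X] [NormedSpace ℂ X] (T : X →ₗ.[ℂ] X) : Prop :=
  ∀ U : Set ℂ, IsOpen U → U.Nonempty → ∀ φ : ℂ → X, AnalyticOnNhd ℂ φ U →
    (∀ z ∈ U, ∃ hz : φ z ∈ T.domain, T ⟨φ z, hz⟩ - z • φ z = 0) →
    ∀ z ∈ U, φ z = 0

/-!
Pairing an eigenvector `T_e u = z u` with the monomials `tⁿ` and using admissibility gives the
triangular recurrence `(z - λₙ) mₙ = n (n - 1) mₙ₋₂ + n (β - α) mₙ₋₁` for the moments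
`mₙ = ∫ u tⁿ w`, where `λₙ = -n (n + α + β + 1)` are the eigenvalues of `T_{(α,β)}` on
polynomials. So if `z` is none of the countably many `λₙ`, all moments of `u` vanish, and `u = 0`
by Weierstrass approximation on `[-1, 1]`. Consequently a local analytic solution `φ` of
`(T_e - z) φ(z) = 0` vanishes off a countable set, hence everywhere by continuity.
-/

lemma integrableOn_jacobiWeight {α β : ℝ} (hα : -1 < α) (hβ : -1 < β) :
    IntegrableOn (fun t : ℝ => (1 - t) ^ α * (1 + t) ^ β) (Set.Icc (-1) 1) := by
  have hleft : IntegrableOn (fun t : ℝ => (1 + t) ^ β) (Set.Icc (-1) 0) := by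
    have h := (intervalIntegral.intervalIntegrable_rpow' hβ (a := 0) (b := 1)).comp_add_left 1
    norm_num at h
    exact (intervalIntegrable_iff_integrableOn_Icc_of_le (by norm_num)).mp h
  have hright : IntegrableOn (fun t : ℝ => (1 - t) ^ α) (Set.Icc 0 1) := by
    have h := (intervalIntegral.intervalIntegrable_rpow' hα (a := 0) (b := 1)).comp_sub_left 1
    norm_num at h
    exact (intervalIntegrable_iff_integrableOn_Icc_of_le (by norm_num)).mp h.symm
  have h₁ : IntegrableOn (fun t : ℝ => (1 - t) ^ α * (1 + t) ^ β) (Set.Icc (-1) 0) :=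
    hleft.continuousOn_mul ((continuousOn_const.sub continuousOn_id).rpow_const
      fun t ht => Or.inl (by linarith [ht.2] : (0 : ℝ) < 1 - t).ne') isCompact_Icc
  have h₂ : IntegrableOn (fun t : ℝ => (1 - t) ^ α * (1 + t) ^ β) (Set.Icc 0 1) :=
    hright.mul_continuousOn ((continuousOn_const.add continuousOn_id).rpow_const
      fun t ht => Or.inl (by linarith [ht.1] : (0 : ℝ) < 1 + t).ne') isCompact_Icc
  simpa only [Set.Icc_union_Icc_eq_Icc (by norm_num : (-1 : ℝ) ≤ 0) zero_le_one] using h₁.union h₂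

lemma isFiniteMeasure_jacobiMeasure {α β : ℝ} (hα : -1 < α) (hβ : -1 < β) :
    IsFiniteMeasure (jacobiMeasure α β) :=
  isFiniteMeasure_withDensity_ofReal
    ((integrableOn_jacobiWeight hα hβ).mono_set Set.Ioo_subset_Icc_self).2

lemma ae_mem_Ioo_jacobiMeasure (α β : ℝ) : ∀ᵐ t ∂(jacobiMeasure α β), t ∈ Set.Ioo (-1 : ℝ) 1 :=
  (withDensity_absolutelyContinuous _ _).ae_le (ae_restrict_mem measurableSet_Ioo)

lemma hasDerivAt_ofReal_pow (n : ℕ) (t : ℝ) :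
    HasDerivAt (fun t : ℝ => (t : ℂ) ^ n) (n * (t : ℂ) ^ (n - 1)) t :=
  (hasDerivAt_pow n (t : ℂ)).comp_ofReal

lemma deriv_ofReal_pow (n : ℕ) :
    deriv (fun t : ℝ => (t : ℂ) ^ n) = fun t : ℝ => n * (t : ℂ) ^ (n - 1) :=
  funext fun t => (hasDerivAt_ofReal_pow n t).deriv

lemma iteratedDeriv_two_ofReal_pow (n : ℕ) :
    iteratedDeriv 2 (fun t : ℝ => (t : ℂ) ^ n) = fun t : ℝ => n * (n - 1) * (t : ℂ) ^ (n - 2) := by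
  rw [iteratedDeriv_succ, iteratedDeriv_one, deriv_ofReal_pow]
  funext t
  rw [((hasDerivAt_ofReal_pow (n - 1) t).const_mul (n : ℂ)).deriv]
  rcases n with _ | n
  · simp
  · push_cast
    ring

def jacobiEigenvalue (α β : ℝ) (n : ℕ) : ℂ := -(n * (n + α + β + 1))

-- For `n < 2` the truncated exponents `n - 2` and `n - 1` are harmless: their coefficients vanish.
lemma jacobiOp_ofReal_pow (α β : ℝ) (n : ℕ) :
    jacobiOp α β (fun t : ℝ => (t : ℂ) ^ n) = fun t : ℝ =>
      n * (n - 1) * (t : ℂ) ^ (n - 2) + n * (β - α) * (t : ℂ) ^ (n - 1) +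
        jacobiEigenvalue α β n * (t : ℂ) ^ n := by
  funext t
  simp only [jacobiOp, iteratedDeriv_two_ofReal_pow, iteratedDeriv_one, deriv_ofReal_pow,
    jacobiEigenvalue]
  rcases n with _ | _ | n
  · simp
  · push_cast
    ring
  · push_cast [show n + 2 - 1 = n + 1 by omega]
    ring

lemma smoothFn_ofReal_pow (n : ℕ) : SmoothFn (fun t : ℝ => (t : ℂ) ^ n) := fun _ =>
  (Complex.ofRealCLM.contDiff.pow n).of_le le_top

section Moments

variable {E : Type*} [NormedAddCommGroup E] [NormedSpace ℝ E] {μ : Measure ℝ} {a b : ℝ}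
  {u : ℝ → E}

lemma integrable_smul_of_ae_mem_Icc (hμ : ∀ᵐ t ∂μ, t ∈ Set.Icc a b) (hu : Integrable u μ)
    {g : ℝ → ℝ} (hg : Continuous g) : Integrable (fun t => g t • u t) μ := by
  obtain ⟨C, hC⟩ := isCompact_Icc.exists_bound_of_continuousOn hg.continuousOn
  exact hu.bdd_smul C hg.aestronglyMeasurable (hμ.mono hC)

lemma integral_eval_smul_eq_zero_of_moments_eq_zero (hμ : ∀ᵐ t ∂μ, t ∈ Set.Icc a b)
    (hu : Integrable u μ) (hm : ∀ n : ℕ, ∫ t, t ^ n • u t ∂μ = 0) (q : Polynomial ℝ) :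
    ∫ t, q.eval t • u t ∂μ = 0 := by
  simp_rw [Polynomial.eval_eq_sum_range, Finset.sum_smul, mul_smul]
  rw [integral_finsetSum]
  · simp [integral_smul, hm]
  · exact fun i _ => (integrable_smul_of_ae_mem_Icc hμ hu (continuous_pow i)).smul (q.coeff i)

lemma integral_smul_eq_zero_of_moments_eq_zero (hμ : ∀ᵐ t ∂μ, t ∈ Set.Icc a b)
    (hu : Integrable u μ) (hm : ∀ n : ℕ, ∫ t, t ^ n • u t ∂μ = 0) {g : ℝ → ℝ}
    (hg : Continuous g) : ∫ t, g t • u t ∂μ = 0 := by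
  set C := ∫ t, ‖u t‖ ∂μ
  have hC : 0 ≤ C := integral_nonneg fun t => norm_nonneg _
  refine norm_le_zero_iff.mp (le_of_forall_pos_le_add fun ε hε => ?_)
  obtain ⟨q, hq⟩ := exists_polynomial_near_of_continuousOn a b g hg.continuousOn
    (ε / (C + 1)) (by positivity)
  have hgq : ∫ t, g t • u t ∂μ = ∫ t, (g t - q.eval t) • u t ∂μ := by
    simp_rw [sub_smul]
    rw [integral_sub (integrable_smul_of_ae_mem_Icc hμ hu hg)
      (integrable_smul_of_ae_mem_Icc hμ hu q.continuous),
      integral_eval_smul_eq_zero_of_moments_eq_zero hμ hu hm, sub_zero]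
  calc ‖∫ t, g t • u t ∂μ‖ ≤ ∫ t, ε / (C + 1) * ‖u t‖ ∂μ := by
        rw [hgq]
        refine norm_integral_le_of_norm_le (hu.norm.const_mul _) ?_
        filter_upwards [hμ] with t ht
        rw [norm_smul, Real.norm_eq_abs, abs_sub_comm]
        exact mul_le_mul_of_nonneg_right (hq t ht).le (norm_nonneg _)
    _ = ε * (C / (C + 1)) := by rw [integral_const_mul]; ring
    _ ≤ 0 + ε := by
        rw [zero_add]
        exact mul_le_of_le_one_right hε.le ((div_le_one (by positivity)).mpr (by linarith))

theorem ae_eq_zero_of_moments_eq_zero [CompleteSpace E] (hμ : ∀ᵐ t ∂μ, t ∈ Set.Icc a b)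
    (hu : Integrable u μ) (hm : ∀ n : ℕ, ∫ t, t ^ n • u t ∂μ = 0) : ∀ᵐ t ∂μ, u t = 0 :=
  ae_eq_zero_of_integral_contDiff_smul_eq_zero hu.locallyIntegrable fun _ hg _ =>
    integral_smul_eq_zero_of_moments_eq_zero hμ hu hm hg.continuous

end Moments

lemma eq_zero_of_jacobi_recurrence {α β : ℝ} {z : ℂ} (hz : z ∉ Set.range (jacobiEigenvalue α β))
    {m : ℕ → ℂ} (hrec : ∀ n : ℕ, (z - jacobiEigenvalue α β n) * m n =
      n * (n - 1) * m (n - 2) + n * (β - α) * m (n - 1)) (n : ℕ) : m n = 0 := by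
  induction n using Nat.strong_induction_on with
  | _ n ih =>
    have hzn : z - jacobiEigenvalue α β n ≠ 0 := sub_ne_zero.mpr fun h => hz ⟨n, h.symm⟩
    refine (mul_eq_zero.mp ((hrec n).trans ?_)).resolve_left hzn
    rcases n with _ | _ | n
    · simp
    · simp [ih 0 one_pos]
    · simp [ih n (by omega), ih (n + 1) (by omega)]

theorem hasSVEP_of_countable_eigenvalues {X : Type*} [NormedAddCommGroup X] [NormedSpace ℂ X]
    {T : X →ₗ.[ℂ] X} {S : Set ℂ} (hS : S.Countable)
    (hT : ∀ z ∉ S, ∀ x : T.domain, T x = z • (x : X) → (x : X) = 0) : HasSVEP T := by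
  intro U hU _ φ hφ hker
  have hzero : Set.EqOn φ 0 (U ∩ Sᶜ) := fun z ⟨hzU, hzS⟩ => by
    obtain ⟨hz, hTz⟩ := hker z hzU
    exact hT z hzS ⟨φ z, hz⟩ (sub_eq_zero.mp hTz)
  exact hzero.of_subset_closure hφ.continuousOn continuousOn_const Set.inter_subset_left
    ((hS.dense_compl ℂ).open_subset_closure_inter hU)

namespace IsAdmissibleJacobiExt

variable {α β : ℝ} {p : ℝ≥0∞} [Fact (1 ≤ p)]
  {Te : Lp ℂ p (jacobiMeasure α β) →ₗ.[ℂ] Lp ℂ p (jacobiMeasure α β)}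

lemma integral_mul_jacobiOp_of_apply_eq_smul (hTe : IsAdmissibleJacobiExt α β p Te)
    {z : ℂ} {u : Te.domain} (hu : Te u = z • (u : Lp ℂ p (jacobiMeasure α β)))
    {g : ℝ → ℂ} (hg : SmoothFn g) :
    ∫ t, (u : Lp ℂ p (jacobiMeasure α β)) t * jacobiOp α β g t ∂(jacobiMeasure α β) =
      z * ∫ t, (u : Lp ℂ p (jacobiMeasure α β)) t * g t ∂(jacobiMeasure α β) := by
  rw [← hTe.2 u g hg, hu, ← integral_const_mul]
  refine integral_congr_ae ?_
  filter_upwards [Lp.coeFn_smul z (u : Lp ℂ p (jacobiMeasure α β))] with t ht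
  rw [ht, Pi.smul_apply, smul_eq_mul, mul_assoc]

theorem eq_zero_of_apply_eq_smul (hα : -1 < α) (hβ : -1 < β)
    (hTe : IsAdmissibleJacobiExt α β p Te) {z : ℂ} (hz : z ∉ Set.range (jacobiEigenvalue α β))
    {u : Te.domain} (hu : Te u = z • (u : Lp ℂ p (jacobiMeasure α β))) :
    (u : Lp ℂ p (jacobiMeasure α β)) = 0 := by
  have := isFiniteMeasure_jacobiMeasure hα hβ
  set v : ℝ → ℂ := ⇑(u : Lp ℂ p (jacobiMeasure α β))
  have hμ : ∀ᵐ t ∂(jacobiMeasure α β), t ∈ Set.Icc (-1 : ℝ) 1 :=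
    (ae_mem_Ioo_jacobiMeasure α β).mono fun t ht => Set.Ioo_subset_Icc_self ht
  have hv : Integrable v (jacobiMeasure α β) := (Lp.memLp _).integrable Fact.out
  have hpow_smul : ∀ n : ℕ, (fun t : ℝ => t ^ n • v t) = fun t => v t * (t : ℂ) ^ n := fun n =>
    funext fun t => by rw [Complex.real_smul, mul_comm, Complex.ofReal_pow]
  have hint : ∀ n : ℕ, Integrable (fun t => v t * (t : ℂ) ^ n) (jacobiMeasure α β) := fun n =>
    hpow_smul n ▸ integrable_smul_of_ae_mem_Icc hμ hv (continuous_pow n)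
  set m : ℕ → ℂ := fun n => ∫ t, v t * (t : ℂ) ^ n ∂(jacobiMeasure α β)
  have hrec : ∀ n : ℕ, (z - jacobiEigenvalue α β n) * m n =
      n * (n - 1) * m (n - 2) + n * (β - α) * m (n - 1) := fun n => by
    have hexp : (fun t => v t * jacobiOp α β (fun t : ℝ => (t : ℂ) ^ n) t) = fun t =>
        n * (n - 1) * (v t * (t : ℂ) ^ (n - 2)) + n * (β - α) * (v t * (t : ℂ) ^ (n - 1)) +
          jacobiEigenvalue α β n * (v t * (t : ℂ) ^ n) := by
      funext t
      rw [jacobiOp_ofReal_pow]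
      ring
    have h := integral_mul_jacobiOp_of_apply_eq_smul hTe hu (smoothFn_ofReal_pow n)
    rw [hexp, integral_add (((hint _).const_mul _).fun_add ((hint _).const_mul _))
      ((hint _).const_mul _), integral_add ((hint _).const_mul _) ((hint _).const_mul _),
      integral_const_mul, integral_const_mul, integral_const_mul] at h
    linear_combination -h
  refine Lp.eq_zero_iff_ae_eq_zero.mpr (ae_eq_zero_of_moments_eq_zero hμ hv fun n => ?_)
  rw [hpow_smul]
  exact eq_zero_of_jacobi_recurrence hz hrec n

end IsAdmissibleJacobiExt

/-- Let `1 ≤ p ≤ ∞` and `α, β ≥ -1/2`. Let `T_{(α,β)}` be the Jacobi operator with domain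
`C^∞[-1,1]`, viewed as an operator on `L^p([-1,1], w_{(α,β)} dt)`, and let `T_e` be any
admissible extension of `T_{(α,β)}`. Then `T_e` has the single-valued extension property. -/
theorem stmt11 (α β : ℝ) (hα : -(1/2 : ℝ) ≤ α) (hβ : -(1/2 : ℝ) ≤ β)
    (p : ℝ≥0∞) [Fact (1 ≤ p)]
    (Te : Lp ℂ p (jacobiMeasure α β) →ₗ.[ℂ] Lp ℂ p (jacobiMeasure α β))
    (hTe : IsAdmissibleJacobiExt α β p Te) :
    HasSVEP Te :=
  hasSVEP_of_countable_eigenvalues (Set.countable_range (jacobiEigenvalue α β)) fun _ hz _ hu =>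
    hTe.eq_zero_of_apply_eq_smul (by linarith) (by linarith) hz hu
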